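/- Let R be a commutative ring, A a commutative R-algebra, and M an R-submodule of A. Then the following two conditions are equivalent: (1) for all a, b ∈ A, if a^m ∈ M for all sufficiently large m, then a^m b ∈ M for all sufficiently large m; (2) for all a, b ∈ A, if a^m ∈ M for all m ≥ 1, then a^m b ∈ M for all sufficiently large m. (In the definition of a Mathieu subspace, the hypothesis 'a^m ∈ M for m >> 0' may equivalently be replaced by 'a^m ∈ M for all m ≥ 1'.) -/

import Mathlib

/-! Given `a ^ m ∈ M` for `m ≥ N`, put `k = N + 1`. Every power of `a ^ k` of positive
exponent lies in `M`, so for each residue `r < k` the weaker hypothesis, applied to `a ^ k` and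
`a ^ r * b`, gives `a ^ (k * q + r) * b ∈ M` for `q ≫ 0`. Finitely many residues cover all `m ≫ 0`. -/

open Filter

theorem Nat.eventually_atTop_of_forall_lt_mul_add {k : ℕ} (hk : k ≠ 0) {P : ℕ → Prop}
    (h : ∀ r < k, ∀ᶠ q in atTop, P (k * q + r)) : ∀ᶠ m in atTop, P m := by
  have hall : ∀ᶠ q in atTop, ∀ r < k, P (k * q + r) :=
    (eventually_all_finite (Set.finite_lt_nat k)).2 h
  filter_upwards [Nat.tendsto_div_const_atTop hk hall] with m hm
  simpa only [Nat.div_add_mod] using hm (m % k) (Nat.mod_lt m (Nat.pos_of_ne_zero hk))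

theorem eventually_pow_mul_mem_of_eventually_pow_mem {A : Type*} [Monoid A] {M : Set A}
    (hM : ∀ a b : A, (∀ m, 1 ≤ m → a ^ m ∈ M) → ∀ᶠ m in atTop, a ^ m * b ∈ M)
    {a : A} (ha : ∀ᶠ m in atTop, a ^ m ∈ M) (b : A) : ∀ᶠ m in atTop, a ^ m * b ∈ M := by
  obtain ⟨N, hN⟩ := eventually_atTop.1 ha
  refine Nat.eventually_atTop_of_forall_lt_mul_add (k := N + 1) N.succ_ne_zero fun r _ => ?_
  have hpow : ∀ m, 1 ≤ m → (a ^ (N + 1)) ^ m ∈ M := fun m hm => by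
    rw [← pow_mul]
    exact hN _ (by nlinarith)
  filter_upwards [hM (a ^ (N + 1)) (a ^ r * b) hpow] with q hq
  rwa [pow_add, pow_mul, mul_assoc]

/-- In the definition of a Mathieu subspace, the hypothesis
`a^m ∈ M` for all sufficiently large `m` may equivalently be replaced by
`a^m ∈ M` for all `m ≥ 1`. -/
theorem mathieuSubspace_def_iff
    (R : Type*) (A : Type*) [CommRing R] [CommRing A] [Algebra R A]
    (M : Submodule R A) :
    (∀ a b : A, (∃ N : ℕ, ∀ m : ℕ, N ≤ m → a ^ m ∈ M) →
        (∃ N : ℕ, ∀ m : ℕ, N ≤ m → a ^ m * b ∈ M)) ↔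
    (∀ a b : A, (∀ m : ℕ, 1 ≤ m → a ^ m ∈ M) →
        (∃ N : ℕ, ∀ m : ℕ, N ≤ m → a ^ m * b ∈ M)) := by
  simp only [← eventually_atTop]
  refine ⟨fun h a b ha => h a b (eventually_atTop.2 ⟨1, ha⟩), fun h a b ha => ?_⟩
  exact eventually_pow_mul_mem_of_eventually_pow_mem h ha b
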